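/- Let A be an algebra over a field k and let S ⊆ LN_alt(A) be a k-subspace of the left alternative nucleus that is closed under the operations [a,b] = ab − ba and [a,b,c] = a(bc) − b(ac) − c[a,b]. Then for all a, b, c, x, y ∈ S the left Bol algebra identities hold: [x,y,[a,b,c]] = [[x,y,a],b,c] + [a,[x,y,b],c] + [a,b,[x,y,c]] and [a,b,[x,y]] = [[a,b,x],y] + [x,[a,b,y]] + [x,y,[a,b]] + [[a,b],[x,y]]. Hence any such subspace is a left Bol algebra. -/

import Mathlib

/-- The associator `(x,y,z) = (xy)z - x(yz)`. -/
def aassoc {A : Type*} [NonUnitalNonAssocRing A] (x y z : A) : A := (x * y) * z - x * (y * z)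

/-- The left alternative nucleus `LN_alt(A) = { a | (a,x,y) = -(x,a,y) for all x, y }`. -/
def leftAltNucleus (A : Type*) [NonUnitalNonAssocRing A] : Set A :=
  {a | ∀ x y : A, aassoc a x y = - aassoc x a y}

/-- The binary operation `[a,b] = ab - ba`. -/
def acomm {A : Type*} [NonUnitalNonAssocRing A] (a b : A) : A := a * b - b * a

/-- The ternary operation `[a,b,c] = a(bc) - b(ac) - c[a,b]`. -/
def tern {A : Type*} [NonUnitalNonAssocRing A] (a b c : A) : A :=
  a * (b * c) - b * (a * c) - c * acomm a b
/-!
For `s` in the left alternative nucleus, `(s,u,v) = -(u,s,v)` says that left multiplication takes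
the Jordan product `s ∘ u = su + us` to the anticommutator: `L (s ∘ u) = L s L u + L u L s`.
For `x, y` in the nucleus, `[x,y,u] = x ∘ (y ∘ u) - y ∘ (x ∘ u)`, so the associative identity
`[[X,Y],U] = X ∘ (Y ∘ U) - Y ∘ (X ∘ U)` gives `L [x,y,u] = [[L x, L y], L u]`. Hence
`D = [x,y,-]` is a derivation up to an associator: `D (uv) = D(u) v + u D(v) - (u,v,[x,y])`.
Applied to the four products making up `[a,b,c]`, the associator defects add up to
`([[L a, L b], L c] - L [a,b,c]) [x,y] = 0`, which is the first Bol identity. Applied to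
`[x,y] = xy - yx` (with `D = [a,b,-]`), they add up to `(y,x,[a,b]) - (x,y,[a,b])`, which in any
algebra equals `[x,y,[a,b]] + [[a,b],[x,y]]`; this is the second.
-/

section

variable {A : Type*} [NonUnitalNonAssocRing A]

def jordanMul (u v : A) : A := u * v + v * u

theorem tern_sub (x y u v : A) : tern x y (u - v) = tern x y u - tern x y v := by
  simp only [tern, mul_sub, sub_mul]
  abel

theorem tern_eq_acomm_acomm_sub_aassoc_add_aassoc (u v w : A) :
    tern u v w = acomm (acomm u v) w - aassoc u v w + aassoc v u w := by
  simp only [tern, acomm, aassoc, mul_sub, sub_mul]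
  abel

end

namespace leftAltNucleus

variable {A : Type*} [NonUnitalNonAssocRing A] {s x y a b : A}

theorem jordanMul_mul (hs : s ∈ leftAltNucleus A) (u v : A) :
    jordanMul s u * v = s * (u * v) + u * (s * v) := by
  have h : s * u * v - s * (u * v) = -(u * s * v - u * (s * v)) := hs u v
  rw [jordanMul, add_mul]
  grind

theorem tern_eq_jordanMul (hx : x ∈ leftAltNucleus A) (hy : y ∈ leftAltNucleus A) (u : A) :
    tern x y u = jordanMul x (jordanMul y u) - jordanMul y (jordanMul x u) := by
  have hxy : u * (x * y) = jordanMul x u * y - x * (u * y) := by rw [jordanMul_mul hx]; abel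
  have hyx : u * (y * x) = jordanMul y u * x - y * (u * x) := by rw [jordanMul_mul hy]; abel
  simp only [tern, acomm, mul_sub, hxy, hyx]
  simp only [jordanMul, mul_add, add_mul]
  abel

theorem tern_mul (hx : x ∈ leftAltNucleus A) (hy : y ∈ leftAltNucleus A) (u v : A) :
    tern x y u * v =
      x * (y * (u * v)) - y * (x * (u * v)) - u * (x * (y * v)) + u * (y * (x * v)) := by
  rw [tern_eq_jordanMul hx hy, sub_mul]
  simp only [jordanMul_mul hx, jordanMul_mul hy, mul_add]
  abel

theorem tern_apply_mul (hx : x ∈ leftAltNucleus A) (hy : y ∈ leftAltNucleus A) (u v : A) :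
    tern x y (u * v) = tern x y u * v + u * tern x y v - aassoc u v (acomm x y) := by
  rw [tern_mul hx hy]
  simp only [tern, aassoc, acomm, mul_sub]
  abel

theorem tern_tern (hx : x ∈ leftAltNucleus A) (hy : y ∈ leftAltNucleus A)
    (ha : a ∈ leftAltNucleus A) (hb : b ∈ leftAltNucleus A) (c : A) :
    tern x y (tern a b c) =
      tern (tern x y a) b c + tern a (tern x y b) c + tern a b (tern x y c) := by
  have hdefect := tern_mul ha hb c (acomm x y)
  rw [show tern a b c = a * (b * c) - b * (a * c) - c * (a * b - b * a) from rfl]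
  simp only [tern_sub, tern_apply_mul hx hy]
  rw [tern, acomm] at hdefect
  generalize tern x y a = a', tern x y b = b', tern x y c = c', acomm x y = m at hdefect ⊢
  rw [eq_comm, ← sub_eq_zero] at hdefect
  rw [← sub_eq_zero, ← hdefect]
  simp only [tern, acomm, aassoc, mul_add, mul_sub, sub_mul]
  abel

theorem tern_acomm (ha : a ∈ leftAltNucleus A) (hb : b ∈ leftAltNucleus A) (x y : A) :
    tern a b (acomm x y) =
      acomm (tern a b x) y + acomm x (tern a b y) + tern x y (acomm a b) +
        acomm (acomm a b) (acomm x y) := by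
  conv_lhs => rw [acomm]
  rw [tern_sub, tern_apply_mul ha hb, tern_apply_mul ha hb,
    tern_eq_acomm_acomm_sub_aassoc_add_aassoc x y (acomm a b)]
  generalize tern a b x = x', tern a b y = y', acomm a b = n
  simp only [acomm, aassoc, mul_sub, sub_mul]
  abel

end leftAltNucleus

theorem bol_identities_of_subspace_of_leftAltNucleus_general {k : Type*} [Field k]
    {A : Type*} [NonUnitalNonAssocRing A] [Module k A]
    (S : Submodule k A) (hS : (S : Set A) ⊆ leftAltNucleus A) :
    ∀ a ∈ S, ∀ b ∈ S, ∀ c ∈ S, ∀ x ∈ S, ∀ y ∈ S,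
      tern x y (tern a b c) =
          tern (tern x y a) b c + tern a (tern x y b) c + tern a b (tern x y c) ∧
        tern a b (acomm x y) =
          acomm (tern a b x) y + acomm x (tern a b y) + tern x y (acomm a b) +
            acomm (acomm a b) (acomm x y) := by
  intro a ha b hb c _ x hx y hy
  exact ⟨leftAltNucleus.tern_tern (hS hx) (hS hy) (hS ha) (hS hb) c,
    leftAltNucleus.tern_acomm (hS ha) (hS hb) x y⟩

/-- Any subspace of the left alternative nucleus of an algebra over a field which is closed
under `[a,b] = ab - ba` and `[a,b,c] = a(bc) - b(ac) - c[a,b]` satisfies the two remaining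
left Bol algebra identities, hence is a left Bol algebra. -/
theorem bol_identities_of_subspace_of_leftAltNucleus {k : Type*} [Field k]
    {A : Type*} [NonUnitalNonAssocRing A] [Module k A]
    [SMulCommClass k A A] [IsScalarTower k A A]
    (S : Submodule k A) (hS : (S : Set A) ⊆ leftAltNucleus A)
    (hcomm : ∀ a ∈ S, ∀ b ∈ S, acomm a b ∈ S)
    (htern : ∀ a ∈ S, ∀ b ∈ S, ∀ c ∈ S, tern a b c ∈ S) :
    ∀ a ∈ S, ∀ b ∈ S, ∀ c ∈ S, ∀ x ∈ S, ∀ y ∈ S,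
      tern x y (tern a b c) =
          tern (tern x y a) b c + tern a (tern x y b) c + tern a b (tern x y c) ∧
        tern a b (acomm x y) =
          acomm (tern a b x) y + acomm x (tern a b y) + tern x y (acomm a b) +
            acomm (acomm a b) (acomm x y) :=
  bol_identities_of_subspace_of_leftAltNucleus_general S hS
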